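/- arXiv:1812.06063 — 6 statements merged into one kernel-verified Lean document; each statement's English description precedes it below -/
import Mathlib

section
/- Let k ≥ 2 and let A be the Yatracos class of F_k, i.e., A = { {x ∈ {1,…,k} : f(x) > g(x)} : f ≠ g ∈ F_k }. Then A contains every nonempty subset of {1,…,2⌊k/2⌋} consisting only of odd numbers, and consequently 2^{⌊k/2⌋} ≤ |A| ≤ 2^k. -/
open Finset

/-- The class `F_k` of non-increasing probability densities on `{1, …, k}`,
represented as functions `ℕ → ℝ` vanishing outside of `{1, …, k}`. -/
def Fk (k : ℕ) : Set (ℕ → ℝ) :=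
  {f | (∀ x, 0 ≤ f x) ∧ (∀ x, x ∉ Finset.Icc 1 k → f x = 0) ∧
    (∑ x ∈ Finset.Icc 1 k, f x = 1) ∧
    (∀ x, 1 ≤ x → x + 1 ≤ k → f (x + 1) ≤ f x)}

/-- The Yatracos class of `F_k`:
`A = { {x ∈ {1, …, k} : f x > g x} : f ≠ g ∈ F_k }`. -/
def YatracosFk (k : ℕ) : Set (Set ℕ) :=
  {S | ∃ f ∈ Fk k, ∃ g ∈ Fk k, f ≠ g ∧ S = {x : ℕ | x ∈ Finset.Icc 1 k ∧ f x > g x}}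

lemma gauss_icc (n : ℕ) : ∑ x ∈ Icc 1 n, (x:ℝ) = n*(n+1)/2 := by
  induction n with
  | zero => simp
  | succ n ih =>
    rw [Finset.sum_Icc_succ_top (by omega)]
    push_cast
    rw [ih]; ring

lemma construction (k : ℕ) (hk : 2 ≤ k) (S : Set ℕ)
    (hS : ∀ s ∈ S, 1 ≤ s ∧ s + 1 ≤ k ∧ Odd s) (hne : S.Nonempty) :
    (S ∈ YatracosFk k) ∧ ({x : ℕ | 2 ≤ x ∧ x - 1 ∈ S} ∈ YatracosFk k) := by
  classical
  have hk0 : (0:ℝ) < (k:ℝ) * ((k:ℝ)+1) := by positivity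
  set ε : ℝ := 1 / ((k:ℝ)*((k:ℝ)+1)) with hε_def
  have hε : 0 < ε := by positivity
  set g : ℕ → ℝ := fun x => if x ∈ Icc 1 k then ((k:ℝ)+1-(x:ℝ))*(2*ε) else 0 with hg_def
  set p : ℕ → ℝ := fun x => (if x ∈ S then ε else 0) - (if x - 1 ∈ S then ε else 0) with hp_def
  set f : ℕ → ℝ := fun x => g x + p x with hf_def
  -- basic S facts
  have hSnotboth : ∀ x, x ∈ S → x - 1 ∉ S := by
    intro x hx hx1
    obtain ⟨h1, _, c, hc⟩ := hS x hx
    obtain ⟨_, _, c', hc'⟩ := hS _ hx1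
    omega
  -- p facts
  have hp_ub : ∀ x, p x ≤ ε := by
    intro x; simp only [hp_def]; split_ifs <;> linarith
  have hp_lb : ∀ x, -ε ≤ p x := by
    intro x; simp only [hp_def]; split_ifs <;> linarith
  have hp_pos : ∀ x, x ∈ S → p x = ε := by
    intro x hx
    simp only [hp_def, if_pos hx, if_neg (hSnotboth x hx)]; ring
  have hp_nonpos : ∀ x, x ∉ S → p x ≤ 0 := by
    intro x hx
    simp only [hp_def, if_neg hx]; split_ifs <;> linarith
  have hp_neg : ∀ x, x - 1 ∈ S → p x = -ε := by
    intro x hx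
    have hxS : x ∉ S := by
      intro hxS
      obtain ⟨h1, _, c, hc⟩ := hS x hxS
      obtain ⟨h1', _, c', hc'⟩ := hS _ hx
      omega
    simp only [hp_def, if_neg hxS, if_pos hx]; ring
  have hp_out : ∀ x, x ∉ Icc 1 k → p x = 0 := by
    intro x hx
    have h1 : x ∉ S := fun h => hx (mem_Icc.mpr ⟨(hS x h).1, by have := (hS x h).2.1; omega⟩)
    have h2 : x - 1 ∉ S := by
      intro h
      obtain ⟨ha, hb, _⟩ := hS _ h
      exact hx (mem_Icc.mpr ⟨by omega, by omega⟩)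
    simp [hp_def, h1, h2]
  -- g facts
  have hg_lb : ∀ x, x ∈ Icc 1 k → 2*ε ≤ g x := by
    intro x hx
    obtain ⟨h1, h2⟩ := mem_Icc.mp hx
    have : (x:ℝ) ≤ (k:ℝ) := by exact_mod_cast h2
    simp only [hg_def, if_pos hx]
    nlinarith
  have hg_out : ∀ x, x ∉ Icc 1 k → g x = 0 := by
    intro x hx; simp only [hg_def]; rw [if_neg hx]
  have hg_step : ∀ x, 1 ≤ x → x + 1 ≤ k → g (x+1) = g x - 2*ε := by
    intro x h1 h2
    have hx : x ∈ Icc 1 k := mem_Icc.mpr ⟨h1, by omega⟩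
    have hx' : x + 1 ∈ Icc 1 k := mem_Icc.mpr ⟨by omega, h2⟩
    simp only [hg_def, if_pos hx, if_pos hx']
    push_cast; ring
  -- sums
  have hsum_g : ∑ x ∈ Icc 1 k, g x = 1 := by
    have h1 : ∑ x ∈ Icc 1 k, g x = ∑ x ∈ Icc 1 k, ((k:ℝ)+1-(x:ℝ))*(2*ε) := by
      apply Finset.sum_congr rfl
      intro x hx; simp only [hg_def]; rw [if_pos hx]
    rw [h1, ← Finset.sum_mul, Finset.sum_sub_distrib, Finset.sum_const, gauss_icc,
      Nat.card_Icc]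
    simp only [nsmul_eq_mul]
    push_cast [Nat.add_sub_cancel]
    rw [hε_def]
    have hne0 : (k:ℝ)*((k:ℝ)+1) ≠ 0 := ne_of_gt hk0
    field_simp
    ring
  have hsum_p : ∑ x ∈ Icc 1 k, p x = 0 := by
    have h1 : ((Icc 1 k).filter (fun x => x - 1 ∈ S)) =
        ((Icc 1 k).filter (fun x => x ∈ S)).image (· + 1) := by
      ext y
      simp only [mem_filter, mem_image, mem_Icc]
      constructor
      · rintro ⟨⟨hy1, hy2⟩, hyS⟩
        obtain ⟨ha, hb, _⟩ := hS _ hyS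
        exact ⟨y - 1, ⟨⟨ha, by omega⟩, hyS⟩, by omega⟩
      · rintro ⟨s, ⟨⟨hs1, hs2⟩, hsS⟩, rfl⟩
        obtain ⟨_, hb, _⟩ := hS _ hsS
        exact ⟨⟨by omega, hb⟩, by simpa using hsS⟩
    have hcard : ((Icc 1 k).filter (fun x => x - 1 ∈ S)).card =
        ((Icc 1 k).filter (fun x => x ∈ S)).card := by
      rw [h1, Finset.card_image_of_injective _ (fun a b h => by omega)]
    simp only [hp_def]
    rw [Finset.sum_sub_distrib, ← Finset.sum_filter, ← Finset.sum_filter,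
      Finset.sum_const, Finset.sum_const, hcard]
    ring
  -- memberships in Fk
  have hgFk : g ∈ Fk k := by
    refine ⟨?_, hg_out, hsum_g, ?_⟩
    · intro x
      by_cases hx : x ∈ Icc 1 k
      · linarith [hg_lb x hx]
      · rw [hg_out x hx]
    · intro x h1 h2
      rw [hg_step x h1 h2]; linarith
  have hfFk : f ∈ Fk k := by
    refine ⟨?_, ?_, ?_, ?_⟩
    · intro x
      by_cases hx : x ∈ Icc 1 k
      · have := hg_lb x hx; have := hp_lb x
        simp only [hf_def]; linarith
      · simp only [hf_def]; rw [hg_out x hx, hp_out x hx]; norm_num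
    · intro x hx
      simp only [hf_def]; rw [hg_out x hx, hp_out x hx]; ring
    · simp only [hf_def]
      rw [Finset.sum_add_distrib, hsum_g, hsum_p]; ring
    · intro x h1 h2
      simp only [hf_def]
      rw [hg_step x h1 h2]
      have := hp_ub (x+1); have := hp_lb x
      linarith
  have hfg : f ≠ g := by
    obtain ⟨s, hs⟩ := hne
    intro h
    have := congrFun h s
    simp only [hf_def] at this
    rw [hp_pos s hs] at this
    linarith
  constructor
  · exact ⟨f, hfFk, g, hgFk, hfg, by
      ext x
      simp only [Set.mem_setOf_eq]
      constructor
      · intro hxS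
        obtain ⟨ha, hb, _⟩ := hS x hxS
        refine ⟨mem_Icc.mpr ⟨ha, by omega⟩, ?_⟩
        simp only [hf_def]
        rw [hp_pos x hxS]
        linarith
      · rintro ⟨hx, hgt⟩
        by_contra hxS
        have := hp_nonpos x hxS
        simp only [hf_def] at hgt
        linarith⟩
  · exact ⟨g, hgFk, f, hfFk, hfg.symm, by
      ext x
      simp only [Set.mem_setOf_eq]
      constructor
      · rintro ⟨h2x, hx1⟩
        obtain ⟨ha, hb, _⟩ := hS _ hx1
        refine ⟨mem_Icc.mpr ⟨by omega, by omega⟩, ?_⟩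
        simp only [hf_def]
        rw [hp_neg x hx1]
        linarith
      · rintro ⟨hx, hgt⟩
        simp only [hf_def] at hgt
        have hpx : p x < 0 := by linarith
        have hxS : x ∉ S := fun h => by rw [hp_pos x h] at hpx; linarith
        have hx1 : x - 1 ∈ S := by
          by_contra h
          simp [hp_def, hxS, h] at hpx
        exact ⟨by obtain ⟨ha, _, _⟩ := hS _ hx1; omega, hx1⟩⟩

lemma odd_hyp (k : ℕ) (hk : 2 ≤ k) (S : Set ℕ)
    (hsub : S ⊆ {x : ℕ | x ∈ Finset.Icc 1 (2 * (k / 2)) ∧ Odd x}) :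
    ∀ s ∈ S, 1 ≤ s ∧ s + 1 ≤ k ∧ Odd s := by
  intro s hs
  obtain ⟨hicc, c, hc⟩ := hsub hs
  rw [Finset.mem_Icc] at hicc
  exact ⟨by omega, by omega, ⟨c, hc⟩⟩

lemma yatracos_finite (k : ℕ) : (YatracosFk k).Finite := by
  apply Set.Finite.subset (Set.Finite.finite_subsets (Finset.finite_toSet (Icc 1 k)))
  rintro t ⟨f, _, g, _, _, rfl⟩
  intro x hx
  exact_mod_cast hx.1

lemma yatracos_upper (k : ℕ) : (YatracosFk k).ncard ≤ 2 ^ k := by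
  classical
  have h := Set.ncard_le_ncard_of_injOn
    (fun t : Set ℕ => (Icc 1 k).filter (· ∈ t))
    (s := YatracosFk k) (t := ↑((Icc 1 k).powerset))
    (by
      intro t _
      simp only [Finset.coe_powerset, Set.mem_preimage, Set.mem_powerset_iff]
      exact_mod_cast Finset.filter_subset _ _)
    (by
      rintro t₁ ⟨f₁, _, g₁, _, _, rfl⟩ t₂ ⟨f₂, _, g₂, _, _, rfl⟩ heq
      beta_reduce at heq
      ext x
      have hiff := Finset.ext_iff.mp heq x
      simp only [Finset.mem_filter, Set.mem_setOf_eq] at hiff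
      simp only [Set.mem_setOf_eq]
      constructor
      · intro hx; exact (hiff.mp ⟨hx.1, hx⟩).2
      · intro hx; exact (hiff.mpr ⟨hx.1, hx⟩).2)
    (Finset.finite_toSet _)
  rwa [Set.ncard_coe_finset, Finset.card_powerset, Nat.card_Icc, Nat.add_sub_cancel] at h

/-- For `k ≥ 2`, the Yatracos class `A` of `F_k` contains every nonempty subset of
`{1, …, 2⌊k/2⌋}` consisting only of odd numbers, and consequently
`2^{⌊k/2⌋} ≤ |A| ≤ 2^k`. -/
theorem stmt3 (k : ℕ) (hk : 2 ≤ k) :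
    (∀ S : Set ℕ, S ⊆ {x : ℕ | x ∈ Finset.Icc 1 (2 * (k / 2)) ∧ Odd x} →
      S.Nonempty → S ∈ YatracosFk k) ∧
    2 ^ (k / 2) ≤ (YatracosFk k).ncard ∧ (YatracosFk k).ncard ≤ 2 ^ k := by
  classical
  have hmem : ∀ S : Set ℕ, S ⊆ {x : ℕ | x ∈ Finset.Icc 1 (2 * (k / 2)) ∧ Odd x} →
      S.Nonempty → S ∈ YatracosFk k := by
    intro S hsub hne
    exact (construction k hk S (odd_hyp k hk S hsub) hne).1
  refine ⟨hmem, ?_, yatracos_upper k⟩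
  -- lower bound
  set O : Finset ℕ := (range (k / 2)).image (fun i => 2 * i + 1) with hO_def
  have hOcard : O.card = k / 2 := by
    rw [hO_def, Finset.card_image_of_injective _ (fun a b h => by omega), Finset.card_range]
  have hOsub : (↑O : Set ℕ) ⊆ {x : ℕ | x ∈ Finset.Icc 1 (2 * (k / 2)) ∧ Odd x} := by
    intro x hx
    simp only [hO_def, Finset.coe_image, Set.mem_image, Finset.mem_coe,
      Finset.mem_range] at hx
    obtain ⟨i, hi, rfl⟩ := hx
    exact ⟨Finset.mem_Icc.mpr ⟨by omega, by omega⟩, ⟨i, by omega⟩⟩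
  have h2mem : ({2} : Set ℕ) ∈ YatracosFk k := by
    have h := (construction k hk {1}
      (by rintro s rfl; exact ⟨le_refl 1, hk, ⟨0, rfl⟩⟩) ⟨1, rfl⟩).2
    convert h using 1
    ext x
    simp only [Set.mem_singleton_iff, Set.mem_setOf_eq]
    omega
  set ψ : Finset ℕ → Set ℕ := fun T => if T = ∅ then ({2} : Set ℕ) else ↑T with hψ_def
  have h := Set.ncard_le_ncard_of_injOn ψ
    (s := ↑O.powerset) (t := YatracosFk k)
    (by
      intro T hT
      simp only [Finset.coe_powerset, Set.mem_preimage, Set.mem_powerset_iff] at hT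
      by_cases hTe : T = ∅
      · simp only [hψ_def, if_pos hTe]; exact h2mem
      · simp only [hψ_def, if_neg hTe]
        apply hmem _ (fun x hx => hOsub (hT hx))
        exact Finset.coe_nonempty.mpr (Finset.nonempty_iff_ne_empty.mpr hTe))
    (by
      have h2O : ∀ T : Finset ℕ, T ⊆ O → T ≠ ∅ → (↑T : Set ℕ) ≠ ({2} : Set ℕ) := by
        intro T hT hTe habs
        obtain ⟨x, hx⟩ := Finset.nonempty_iff_ne_empty.mpr hTe
        have hx2 : x ∈ ({2} : Set ℕ) := habs ▸ (Finset.mem_coe.mpr hx)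
        rw [Set.mem_singleton_iff] at hx2
        subst hx2
        obtain ⟨_, _, c, hc⟩ := odd_hyp k hk _ hOsub 2 (hT hx)
        omega
      intro T₁ hT₁ T₂ hT₂ heq
      simp only [Finset.coe_powerset, Set.mem_preimage, Set.mem_powerset_iff] at hT₁ hT₂
      by_cases h1 : T₁ = ∅ <;> by_cases h2 : T₂ = ∅
      · rw [h1, h2]
      · simp only [hψ_def, if_pos h1, if_neg h2] at heq
        exact absurd heq.symm (h2O T₂ (by exact_mod_cast hT₂) h2)
      · simp only [hψ_def, if_neg h1, if_pos h2] at heq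
        exact absurd heq (h2O T₁ (by exact_mod_cast hT₁) h1)
      · simp only [hψ_def, if_neg h1, if_neg h2] at heq
        exact_mod_cast heq)
    (yatracos_finite k)
  rwa [Set.ncard_coe_finset, Finset.card_powerset, hOcard] at h
end

section
/- Let f be a non-increasing probability density on {1,…,k}, and let g : {1,…,k} → ℝ be constant with value y_v on an interval I_v and constant with value y_w on the adjacent interval I_w immediately to the right of I_v, with y_v < y_w. Let g' agree with g outside I_v ∪ I_w and be constant on I_v ∪ I_w with value (y_v|I_v| + y_w|I_w|)/(|I_v| + |I_w|). Then Σ_{x=1}^{k} |g'(x) − f(x)| ≤ Σ_{x=1}^{k} |g(x) − f(x)|. -/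
open Finset

lemma abs_submod (p q s t : ℝ) (hpq : p ≤ q) (hst : s ≤ t) :
    |q - t| + |p - s| ≤ |q - s| + |p - t| := by
  rcases abs_cases (q - t) with ⟨h1, h1'⟩ | ⟨h1, h1'⟩ <;>
  rcases abs_cases (p - s) with ⟨h2, h2'⟩ | ⟨h2, h2'⟩ <;>
  rcases abs_cases (q - s) with ⟨h3, h3'⟩ | ⟨h3, h3'⟩ <;>
  rcases abs_cases (p - t) with ⟨h4, h4'⟩ | ⟨h4, h4'⟩ <;>
  linarith

lemma mono_le (k : ℕ) (f : ℕ → ℝ)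
    (hmono : ∀ x, 1 ≤ x → x + 1 ≤ k → f (x + 1) ≤ f x) :
    ∀ x y, 1 ≤ x → x ≤ y → y ≤ k → f y ≤ f x := by
  intro x y hx hxy hyk
  induction y with
  | zero => omega
  | succ n ih =>
    rcases Nat.lt_or_ge x (n + 1) with h | h
    · have h1 : x ≤ n := by omega
      have h2 : f (n + 1) ≤ f n := hmono n (by omega) hyk
      exact h2.trans (ih h1 (by omega))
    · have : x = n + 1 := by omega
      simp [this]

/-- **Birgé's merging operation does not increase the `L₁` distance to a
non-increasing density.** Let `f` be a non-increasing probability density on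
`{1, …, k}`, and let `g` be constant with value `y_v` on the interval
`I_v = {a, …, a + m_v - 1}` and constant with value `y_w` on the adjacent interval
`I_w = {a + m_v, …, a + m_v + m_w - 1}` immediately to its right, with `y_v < y_w`.
If `g'` agrees with `g` outside `I_v ∪ I_w` and is constant on `I_v ∪ I_w` with value
`(y_v |I_v| + y_w |I_w|) / (|I_v| + |I_w|)`, then
`∑_{x=1}^{k} |g' x - f x| ≤ ∑_{x=1}^{k} |g x - f x|`. -/
theorem stmt4 (k a mv mw : ℕ) (ha : 1 ≤ a) (hmv : 1 ≤ mv) (hmw : 1 ≤ mw)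
    (hk : a + mv + mw ≤ k + 1)
    (f : ℕ → ℝ) (hf0 : ∀ x, 0 ≤ f x)
    (hf1 : ∑ x ∈ Finset.Icc 1 k, f x = 1)
    (hmono : ∀ x, 1 ≤ x → x + 1 ≤ k → f (x + 1) ≤ f x)
    (yv yw : ℝ) (hy : yv < yw)
    (g g' : ℕ → ℝ)
    (hgv : ∀ x ∈ Finset.Ico a (a + mv), g x = yv)
    (hgw : ∀ x ∈ Finset.Ico (a + mv) (a + mv + mw), g x = yw)
    (hg'in : ∀ x ∈ Finset.Ico a (a + mv + mw),
      g' x = (yv * mv + yw * mw) / ((mv : ℝ) + mw))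
    (hg'out : ∀ x, x ∉ Finset.Ico a (a + mv + mw) → g' x = g x) :
    ∑ x ∈ Finset.Icc 1 k, |g' x - f x| ≤ ∑ x ∈ Finset.Icc 1 k, |g x - f x| := by
  set ybar : ℝ := (yv * mv + yw * mw) / ((mv : ℝ) + mw) with hybar_def
  set c : ℝ := f (a + mv) with hc_def
  have hmv' : (1 : ℝ) ≤ mv := by exact_mod_cast hmv
  have hmw' : (1 : ℝ) ≤ mw := by exact_mod_cast hmw
  have hpos : (0 : ℝ) < (mv : ℝ) + mw := by linarith
  have hybar : ybar * ((mv : ℝ) + mw) = yv * mv + yw * mw :=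
    div_mul_cancel₀ _ hpos.ne'
  have hyv_le : yv ≤ ybar := by
    rw [hybar_def, le_div_iff₀ hpos]; nlinarith
  have hle_yw : ybar ≤ yw := by
    rw [hybar_def, div_le_iff₀ hpos]; nlinarith
  have hsub : Finset.Ico a (a + mv + mw) ⊆ Finset.Icc 1 k := by
    intro x hx
    simp only [Finset.mem_Ico] at hx
    simp only [Finset.mem_Icc]
    omega
  -- complement part
  rw [← Finset.sum_sdiff hsub, ← Finset.sum_sdiff hsub]
  have hcompl : ∑ x ∈ Finset.Icc 1 k \ Finset.Ico a (a + mv + mw), |g' x - f x|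
      = ∑ x ∈ Finset.Icc 1 k \ Finset.Ico a (a + mv + mw), |g x - f x| := by
    refine Finset.sum_congr rfl fun x hx => ?_
    rw [hg'out x (Finset.mem_sdiff.mp hx).2]
  refine add_le_add (le_of_eq hcompl) ?_
  -- main part on the interval
  have hsplit : a ≤ a + mv := by omega
  have hsplit2 : a + mv ≤ a + mv + mw := by omega
  rw [← Finset.sum_Ico_consecutive _ hsplit hsplit2,
      ← Finset.sum_Ico_consecutive _ hsplit hsplit2]
  have hcv : ∀ x ∈ Finset.Ico a (a + mv), c ≤ f x := by
    intro x hx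
    simp only [Finset.mem_Ico] at hx
    exact mono_le k f hmono x (a + mv) (by omega) (by omega) (by omega)
  have hcw : ∀ x ∈ Finset.Ico (a + mv) (a + mv + mw), f x ≤ c := by
    intro x hx
    simp only [Finset.mem_Ico] at hx
    exact mono_le k f hmono (a + mv) x (by omega) (by omega) (by omega)
  have h1 : ∀ x ∈ Finset.Ico a (a + mv),
      |g' x - f x| ≤ |g x - f x| + (|ybar - c| - |yv - c|) := by
    intro x hx
    rw [hg'in x (by simp only [Finset.mem_Ico] at hx ⊢; omega), hgv x hx]
    have := abs_submod yv ybar c (f x) hyv_le (hcv x hx)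
    linarith
  have h2 : ∀ x ∈ Finset.Ico (a + mv) (a + mv + mw),
      |g' x - f x| ≤ |g x - f x| + (|ybar - c| - |yw - c|) := by
    intro x hx
    rw [hg'in x (by simp only [Finset.mem_Ico] at hx ⊢; omega), hgw x hx]
    have := abs_submod ybar yw (f x) c hle_yw (hcw x hx)
    linarith
  have s1 := Finset.sum_le_sum h1
  have s2 := Finset.sum_le_sum h2
  rw [Finset.sum_add_distrib, Finset.sum_const, Nat.card_Ico] at s1
  rw [Finset.sum_add_distrib, Finset.sum_const, Nat.card_Ico] at s2
  have hcard1 : a + mv - a = mv := by omega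
  have hcard2 : a + mv + mw - (a + mv) = mw := by omega
  rw [hcard1, nsmul_eq_mul] at s1
  rw [hcard2, nsmul_eq_mul] at s2
  have hkey : ((mv : ℝ) + mw) * |ybar - c| ≤ mv * |yv - c| + mw * |yw - c| := by
    have h := abs_add_le ((mv : ℝ) * (yv - c)) ((mw : ℝ) * (yw - c))
    rw [abs_mul, abs_mul, Nat.abs_cast, Nat.abs_cast] at h
    calc ((mv : ℝ) + mw) * |ybar - c| = |((mv : ℝ) + mw) * (ybar - c)| := by
          rw [abs_mul, abs_of_nonneg hpos.le]
      _ = |(mv : ℝ) * (yv - c) + (mw : ℝ) * (yw - c)| := by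
          congr 1; linear_combination hybar
      _ ≤ (mv : ℝ) * |yv - c| + (mw : ℝ) * |yw - c| := h
  have : (mv : ℝ) * (|ybar - c| - |yv - c|) + (mw : ℝ) * (|ybar - c| - |yw - c|) ≤ 0 := by
    nlinarith
  calc ∑ x ∈ Finset.Ico a (a + mv), |g' x - f x|
        + ∑ x ∈ Finset.Ico (a + mv) (a + mv + mw), |g' x - f x|
      ≤ (∑ x ∈ Finset.Ico a (a + mv), |g x - f x| + (mv : ℝ) * (|ybar - c| - |yv - c|))
        + (∑ x ∈ Finset.Ico (a + mv) (a + mv + mw), |g x - f x|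
          + (mw : ℝ) * (|ybar - c| - |yw - c|)) := by
        exact add_le_add s1 s2
    _ ≤ ∑ x ∈ Finset.Ico a (a + mv), |g x - f x|
        + ∑ x ∈ Finset.Ico (a + mv) (a + mv + mw), |g x - f x| := by linarith
end

section
/- Let k be a power of 2, n ≥ 1, and f a non-increasing probability density on {1,…,k}. Let f*_n be the idealized tree-based estimate of f with leaf set L*. Then TV(f*_n, f) ≤ (5/2) · sqrt( |{u ∈ L* : |I_u| > 1}| / n ). -/
/-!
On a non-singleton leaf `u` with halves `I_v`, `I_w`, the non-splitting condition and
monotonicity give `∑_{I_u} |f - f̄_{I_u}| ≤ 2 (f_{I_v} - f_{I_w}) ≤ 2 √(f_{I_u}/n)`: the mean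
`f̄_{I_u}` lies either above all of `I_w` or below all of `I_v`, and pairing `x ∈ I_v` with
`x + |I_v| ∈ I_w` bounds the positive (resp. negative) part of `f - f̄_{I_u}` on the pair by
`f(x) - f(x + |I_v|)`. Singleton leaves contribute nothing, and Cauchy–Schwarz with
`∑_u f_{I_u} ≤ 1` bounds `∑_u √(f_{I_u}/n)` by `√(|{u ∈ L* : |I_u| > 1}|/n)`.
-/

open Finset

/-- For `k = 2^m`, the node at depth `j` and position `i` (for `i < 2^j`) of the
complete binary tree of dyadic subintervals of `{1, …, 2^m}` covers the interval
`I_{j,i} = {i · 2^{m-j} + 1, …, (i+1) · 2^{m-j}}`. -/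
def nodeInterval (m j i : ℕ) : Finset ℕ :=
  Finset.Icc (i * 2 ^ (m - j) + 1) ((i + 1) * 2 ^ (m - j))

/-- `f_{I_{j,i}} = ∑_{x ∈ I_{j,i}} f x`, the mass of `f` on the interval of node `(j, i)`. -/
noncomputable def blockSum (f : ℕ → ℝ) (m j i : ℕ) : ℝ :=
  ∑ x ∈ nodeInterval m j i, f x

/-- The idealized splitting rule: the node `(j, i)` splits iff its interval has more
than one point (i.e. `j < m`) and, with `I_v`, `I_w` the left and right halves of its
interval, `f_{I_v} - f_{I_w} > √((f_{I_v} + f_{I_w})/n)`. -/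
def Splits (f : ℕ → ℝ) (n m j i : ℕ) : Prop :=
  j < m ∧
    blockSum f m (j + 1) (2 * i) - blockSum f m (j + 1) (2 * i + 1) >
      Real.sqrt ((blockSum f m (j + 1) (2 * i) + blockSum f m (j + 1) (2 * i + 1)) / n)

/-- Membership of the node `(j, i)` in the idealized tree `T*(f)`: the root `(0, 0)`
is in the tree, and a node is in the tree iff its parent is in the tree and splits. -/
def InTree (f : ℕ → ℝ) (n m : ℕ) : ℕ → ℕ → Prop
  | 0, i => i = 0
  | j + 1, i => InTree f n m j (i / 2) ∧ Splits f n m j (i / 2)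

/-- The node `(j, i)` is a leaf of the idealized tree `T*(f)`: it belongs to the tree
and does not split. -/
def IsLeaf (f : ℕ → ℝ) (n m j i : ℕ) : Prop :=
  InTree f n m j i ∧ ¬ Splits f n m j i

lemma sum_Ioc_add_shift (φ : ℕ → ℝ) (A h : ℕ) :
    ∑ x ∈ Ioc (A + h) (A + 2 * h), φ x = ∑ x ∈ Ioc A (A + h), φ (x + h) := by
  rw [show A + 2 * h = A + h + h by ring, ← Finset.map_add_right_Ioc, sum_map]
  rfl

lemma sum_Ioc_two_mul_eq_sum_add_shift (φ : ℕ → ℝ) (A h : ℕ) :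
    ∑ x ∈ Ioc A (A + 2 * h), φ x = ∑ x ∈ Ioc A (A + h), (φ x + φ (x + h)) := by
  rw [← sum_Ioc_consecutive _ (Nat.le_add_right A h) (by omega : A + h ≤ A + 2 * h),
    sum_Ioc_add_shift, sum_add_distrib]

lemma sum_abs_eq_two_mul_sum_posPart {ι : Type*} {s : Finset ι} {y : ι → ℝ}
    (hy : ∑ i ∈ s, y i = 0) : ∑ i ∈ s, |y i| = 2 * ∑ i ∈ s, (y i)⁺ := by
  have : ∑ i ∈ s, (y i)⁺ - ∑ i ∈ s, (y i)⁻ = 0 := by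
    rw [← sum_sub_distrib, ← hy]; simp only [posPart_sub_negPart]
  simp only [← posPart_add_negPart, sum_add_distrib]
  linarith

lemma sum_abs_eq_two_mul_sum_negPart {ι : Type*} {s : Finset ι} {y : ι → ℝ}
    (hy : ∑ i ∈ s, y i = 0) : ∑ i ∈ s, |y i| = 2 * ∑ i ∈ s, (y i)⁻ := by
  simpa only [abs_neg, posPart_neg] using
    sum_abs_eq_two_mul_sum_posPart (s := s) (y := fun i => -y i)
      (by rw [sum_neg_distrib, hy, neg_zero])

lemma posPart_sub_add_posPart_sub_le {u v a : ℝ} (hva : v ≤ a) (hvu : v ≤ u) :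
    (u - a)⁺ + (v - a)⁺ ≤ u - v := by
  rw [(posPart_eq_zero (a := v - a)).2 (by linarith), add_zero]
  exact max_le (by linarith) (by linarith)

lemma negPart_sub_add_negPart_sub_le {u v a : ℝ} (hau : a ≤ u) (hvu : v ≤ u) :
    (u - a)⁻ + (v - a)⁻ ≤ u - v := by
  rw [(negPart_eq_zero (a := u - a)).2 (by linarith), zero_add]
  exact max_le (by linarith) (by linarith)

lemma sum_abs_sub_mean_le_of_antitoneOn (f : ℕ → ℝ) (A h : ℕ)
    (hf : AntitoneOn f (Set.Ioc A (A + 2 * h))) :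
    ∑ x ∈ Ioc A (A + 2 * h), |f x - (∑ y ∈ Ioc A (A + 2 * h), f y) / (2 * h)| ≤
      2 * (∑ x ∈ Ioc A (A + h), f x - ∑ x ∈ Ioc (A + h) (A + 2 * h), f x) := by
  rcases Nat.eq_zero_or_pos h with rfl | hh
  · simp
  set a := (∑ y ∈ Ioc A (A + 2 * h), f y) / (2 * h)
  have hmean : ∑ x ∈ Ioc A (A + 2 * h), (f x - a) = 0 := by
    rw [sum_sub_distrib, sum_const, Nat.card_Ioc, Nat.add_sub_cancel_left, nsmul_eq_mul,
      Nat.cast_mul, Nat.cast_two, mul_div_cancel₀ _ (by positivity), sub_self]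
  have hhalves : ∑ x ∈ Ioc A (A + h), f x - ∑ x ∈ Ioc (A + h) (A + 2 * h), f x =
      ∑ x ∈ Ioc A (A + h), (f x - f (x + h)) := by
    rw [sum_Ioc_add_shift, sum_sub_distrib]
  have hanti : ∀ {x y}, A < x → x ≤ y → y ≤ A + 2 * h → f y ≤ f x := fun hx hxy hy =>
    hf ⟨hx, by omega⟩ ⟨by omega, hy⟩ hxy
  rw [hhalves]
  rcases le_total (f (A + h + 1)) a with hright | hleft
  · rw [sum_abs_eq_two_mul_sum_posPart hmean, sum_Ioc_two_mul_eq_sum_add_shift]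
    gcongr with x hx
    rw [mem_Ioc] at hx
    exact posPart_sub_add_posPart_sub_le ((hanti (by omega) (by omega) (by omega)).trans hright)
      (hanti hx.1 (by omega) (by omega))
  · rw [sum_abs_eq_two_mul_sum_negPart hmean, sum_Ioc_two_mul_eq_sum_add_shift]
    gcongr with x hx
    rw [mem_Ioc] at hx
    exact negPart_sub_add_negPart_sub_le (hleft.trans (hanti (by omega) (by omega) (by omega)))
      (hanti hx.1 (by omega) (by omega))

lemma sum_sqrt_div_le_sqrt_card_div {ι : Type*} (s : Finset ι) {b : ι → ℝ}
    (hb : ∀ i, 0 ≤ b i) (hsum : ∑ i ∈ s, b i ≤ 1) (n : ℕ) :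
    ∑ i ∈ s, Real.sqrt (b i / n) ≤ Real.sqrt (#s / n) := by
  calc ∑ i ∈ s, Real.sqrt (b i / n) = ∑ i ∈ s, Real.sqrt 1 * Real.sqrt (b i / n) := by simp
    _ ≤ Real.sqrt (∑ i ∈ s, 1) * Real.sqrt (∑ i ∈ s, b i / n) :=
        Real.sum_sqrt_mul_sqrt_le s (fun _ => zero_le_one) fun i => by have := hb i; positivity
    _ ≤ Real.sqrt #s * Real.sqrt (1 / n) := by
        rw [← sum_div, sum_const, nsmul_one]
        gcongr
    _ = Real.sqrt (#s / n) := by rw [← Real.sqrt_mul (Nat.cast_nonneg _), mul_one_div]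

lemma blockSum_nonneg {f : ℕ → ℝ} (hf : ∀ x, 0 ≤ f x) (m j i : ℕ) : 0 ≤ blockSum f m j i :=
  sum_nonneg fun x _ => hf x

def nodeIndex (m j x : ℕ) : ℕ := (x - 1) / 2 ^ (m - j)

lemma nodeInterval_eq_Ioc (m j i : ℕ) :
    nodeInterval m j i = Ioc (i * 2 ^ (m - j)) ((i + 1) * 2 ^ (m - j)) := by
  ext x; simp only [nodeInterval, mem_Icc, mem_Ioc]; omega

lemma mem_nodeInterval_iff {m j i x : ℕ} (hx : 1 ≤ x) :
    x ∈ nodeInterval m j i ↔ i = nodeIndex m j x := by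
  have hpos := Nat.two_pow_pos (m - j)
  rw [nodeInterval, mem_Icc, nodeIndex, eq_comm, Nat.div_eq_iff hpos, add_mul, one_mul]
  omega

lemma nodeIndex_zero {m x : ℕ} (hx : x ≤ 2 ^ m) : nodeIndex m 0 x = 0 := by
  have := Nat.two_pow_pos m
  rw [nodeIndex, Nat.sub_zero]
  exact Nat.div_eq_of_lt (by omega)

lemma nodeIndex_succ_div_two {m j : ℕ} (x : ℕ) (hj : j < m) :
    nodeIndex m (j + 1) x / 2 = nodeIndex m j x := by
  rw [nodeIndex, nodeIndex, Nat.div_div_eq_div_mul, ← pow_succ,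
    show m - (j + 1) + 1 = m - j by omega]

lemma InTree.le_and_lt_two_pow {f : ℕ → ℝ} {n m : ℕ} :
    ∀ {j i : ℕ}, InTree f n m j i → j ≤ m ∧ i < 2 ^ j
  | 0, i, h => by rw [InTree] at h; simp [h]
  | j + 1, i, ⟨hparent, hsplit⟩ => by
    have := (InTree.le_and_lt_two_pow hparent).2
    exact ⟨hsplit.1, by rw [pow_succ]; omega⟩

lemma nodeInterval_subset_Icc {m j i : ℕ} (hj : j ≤ m) (hi : i < 2 ^ j) :
    nodeInterval m j i ⊆ Icc 1 (2 ^ m) := by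
  have : (i + 1) * 2 ^ (m - j) ≤ 2 ^ m := by
    calc (i + 1) * 2 ^ (m - j) ≤ 2 ^ j * 2 ^ (m - j) := Nat.mul_le_mul_right _ hi
      _ = 2 ^ m := by rw [← pow_add, Nat.add_sub_cancel' hj]
  intro x hx
  rw [nodeInterval, mem_Icc] at hx
  rw [mem_Icc]; constructor <;> omega

lemma inTree_nodeIndex_iff {f : ℕ → ℝ} {n m x : ℕ} (hx : x ≤ 2 ^ m) (j : ℕ) :
    InTree f n m j (nodeIndex m j x) ↔ ∀ j' < j, Splits f n m j' (nodeIndex m j' x) := by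
  induction j with
  | zero => simp [InTree, nodeIndex_zero hx]
  | succ j ih =>
    by_cases hj : j < m
    · rw [InTree, nodeIndex_succ_div_two x hj, ih, Nat.forall_lt_succ_right]
    · simp only [InTree, Splits, hj, false_and, and_false, false_iff, not_forall]
      exact ⟨j, j.lt_succ_self, fun h => hj h.1⟩

lemma existsUnique_isLeaf_mem {f : ℕ → ℝ} {n m x : ℕ} (hx1 : 1 ≤ x) (hx2 : x ≤ 2 ^ m) :
    ∃! p : ℕ × ℕ, IsLeaf f n m p.1 p.2 ∧ x ∈ nodeInterval m p.1 p.2 := by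
  classical
  have hex : ∃ j, ¬ Splits f n m j (nodeIndex m j x) := ⟨m, fun h => h.1.false⟩
  refine ⟨(Nat.find hex, nodeIndex m (Nat.find hex) x), ⟨⟨?_, Nat.find_spec hex⟩, ?_⟩, ?_⟩
  · exact (inTree_nodeIndex_iff hx2 _).2 fun j hj => not_not.1 (Nat.find_min hex hj)
  · exact (mem_nodeInterval_iff hx1).2 rfl
  · rintro ⟨j, i⟩ ⟨⟨hT, hns⟩, hx⟩
    obtain rfl : i = nodeIndex m j x := (mem_nodeInterval_iff hx1).1 hx
    have : Nat.find hex = j := (Nat.find_eq_iff hex).2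
      ⟨hns, fun j' hj' => not_not.2 ((inTree_nodeIndex_iff hx2 j).1 hT j' hj')⟩
    rw [this]

lemma sum_Icc_eq_sum_sum_nodeInterval_of_leaves {f : ℕ → ℝ} {n m : ℕ} {L : Finset (ℕ × ℕ)}
    (hL : ∀ p : ℕ × ℕ, p ∈ L ↔ IsLeaf f n m p.1 p.2) (G : ℕ → ℝ) :
    ∑ x ∈ Icc 1 (2 ^ m), G x = ∑ p ∈ L, ∑ x ∈ nodeInterval m p.1 p.2, G x := by
  have hcover : Icc 1 (2 ^ m) = L.biUnion fun p => nodeInterval m p.1 p.2 := by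
    ext x
    rw [mem_biUnion]
    constructor
    · intro hx
      rw [mem_Icc] at hx
      obtain ⟨p, ⟨hleaf, hmem⟩, -⟩ := existsUnique_isLeaf_mem (f := f) (n := n) hx.1 hx.2
      exact ⟨p, (hL p).2 hleaf, hmem⟩
    · rintro ⟨p, hp, hx⟩
      obtain ⟨hj, hi⟩ := ((hL p).1 hp).1.le_and_lt_two_pow
      exact nodeInterval_subset_Icc hj hi hx
  rw [hcover, sum_biUnion]
  intro p hp q hq hpq
  rw [Function.onFun, disjoint_left]
  intro x hxp hxq
  have hx := mem_Icc.1 (hcover ▸ mem_biUnion.2 ⟨p, hp, hxp⟩)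
  exact hpq ((existsUnique_isLeaf_mem hx.1 hx.2).unique ⟨(hL p).1 hp, hxp⟩ ⟨(hL q).1 hq, hxq⟩)

lemma sum_abs_blockMean_sub_le_of_not_splits {f : ℕ → ℝ} {n m j i : ℕ}
    (hf : AntitoneOn f (nodeInterval m j i)) (hj : j < m) (hns : ¬ Splits f n m j i) :
    ∑ x ∈ nodeInterval m j i, |blockSum f m j i / (2 : ℝ) ^ (m - j) - f x| ≤
      2 * Real.sqrt (blockSum f m j i / n) := by
  set h := 2 ^ (m - (j + 1))
  set A := 2 * i * h
  have hpow : 2 ^ (m - j) = 2 * h := by rw [← pow_succ', show m - (j + 1) + 1 = m - j by omega]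
  have hnode : nodeInterval m j i = Ioc A (A + 2 * h) := by
    rw [nodeInterval_eq_Ioc, hpow]; congr 1 <;> ring
  have hleft : nodeInterval m (j + 1) (2 * i) = Ioc A (A + h) := by
    rw [nodeInterval_eq_Ioc]; congr 1; ring
  have hright : nodeInterval m (j + 1) (2 * i + 1) = Ioc (A + h) (A + 2 * h) := by
    rw [nodeInterval_eq_Ioc]; congr 1 <;> ring
  have hsplit : blockSum f m j i =
      blockSum f m (j + 1) (2 * i) + blockSum f m (j + 1) (2 * i + 1) := by
    simp only [blockSum, hnode, hleft, hright]
    exact (sum_Ioc_consecutive _ (by omega) (by omega)).symm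
  have hgap : blockSum f m (j + 1) (2 * i) - blockSum f m (j + 1) (2 * i + 1) ≤
      Real.sqrt (blockSum f m j i / n) := by
    rw [hsplit]; exact not_lt.1 fun h => hns ⟨hj, h⟩
  calc ∑ x ∈ nodeInterval m j i, |blockSum f m j i / (2 : ℝ) ^ (m - j) - f x|
      = ∑ x ∈ Ioc A (A + 2 * h), |f x - (∑ y ∈ Ioc A (A + 2 * h), f y) / (2 * h)| := by
        simp only [blockSum, hnode, abs_sub_comm, ← Nat.cast_ofNat (R := ℝ), ← Nat.cast_pow, hpow,
          Nat.cast_mul]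
    _ ≤ 2 * (∑ x ∈ Ioc A (A + h), f x - ∑ x ∈ Ioc (A + h) (A + 2 * h), f x) :=
        sum_abs_sub_mean_le_of_antitoneOn f A h (by rwa [hnode, coe_Ioc] at hf)
    _ ≤ 2 * Real.sqrt (blockSum f m j i / n) := by
        rw [← hleft, ← hright]
        exact mul_le_mul_of_nonneg_left hgap zero_le_two

lemma sum_abs_blockMean_sub_of_singleton (f : ℕ → ℝ) (m i : ℕ) :
    ∑ x ∈ nodeInterval m m i, |blockSum f m m i / (2 : ℝ) ^ (m - m) - f x| = 0 := by
  simp [blockSum, nodeInterval]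

lemma sum_abs_sub_le_of_isLeaf {f g : ℕ → ℝ} {n m j i : ℕ}
    (hf : AntitoneOn f (Set.Icc 1 (2 ^ m))) (hleaf : IsLeaf f n m j i)
    (hg : ∀ x ∈ nodeInterval m j i, g x = blockSum f m j i / (2 : ℝ) ^ (m - j)) :
    ∑ x ∈ nodeInterval m j i, |g x - f x| ≤
      if j < m then 2 * Real.sqrt (blockSum f m j i / n) else 0 := by
  obtain ⟨hjm, hi⟩ := hleaf.1.le_and_lt_two_pow
  rw [sum_congr rfl fun x hx => by rw [hg x hx]]
  split_ifs with hj
  · refine sum_abs_blockMean_sub_le_of_not_splits (hf.mono ?_) hj hleaf.2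
    rw [← coe_Icc]
    exact coe_subset.2 (nodeInterval_subset_Icc hjm hi)
  · obtain rfl : j = m := by omega
    exact (sum_abs_blockMean_sub_of_singleton f j i).le

theorem stmt5_general (m n : ℕ) (f : ℕ → ℝ)
    (hf0 : ∀ x, 0 ≤ f x)
    (hf1 : ∑ x ∈ Finset.Icc 1 (2 ^ m), f x = 1)
    (hmono : ∀ x, 1 ≤ x → x + 1 ≤ 2 ^ m → f (x + 1) ≤ f x)
    (g : ℕ → ℝ)
    (hg : ∀ j i, IsLeaf f n m j i → ∀ x ∈ nodeInterval m j i,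
      g x = blockSum f m j i / (2 : ℝ) ^ (m - j))
    (L : Finset (ℕ × ℕ))
    (hL : ∀ p : ℕ × ℕ, p ∈ L ↔ IsLeaf f n m p.1 p.2) :
    (∑ x ∈ Finset.Icc 1 (2 ^ m), |g x - f x|) / 2 ≤
      (5 / 2) * Real.sqrt (((L.filter fun p => p.1 < m).card : ℝ) / n) := by
  have hanti : AntitoneOn f (Set.Icc 1 (2 ^ m)) :=
    antitoneOn_of_add_one_le Set.ordConnected_Icc fun x _ hx hx1 => hmono x hx.1 hx1.2
  have hmass : ∑ p ∈ L with p.1 < m, blockSum f m p.1 p.2 ≤ 1 := by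
    calc _ ≤ ∑ p ∈ L, blockSum f m p.1 p.2 :=
          sum_le_sum_of_subset_of_nonneg (filter_subset _ _)
            fun p _ _ => blockSum_nonneg hf0 _ _ _
      _ = 1 := by rw [← hf1, sum_Icc_eq_sum_sum_nodeInterval_of_leaves hL]; rfl
  calc (∑ x ∈ Icc 1 (2 ^ m), |g x - f x|) / 2
      ≤ (∑ p ∈ L with p.1 < m, 2 * Real.sqrt (blockSum f m p.1 p.2 / n)) / 2 := by
        rw [sum_Icc_eq_sum_sum_nodeInterval_of_leaves hL, sum_filter]
        gcongr with p hp
        exact sum_abs_sub_le_of_isLeaf hanti ((hL p).1 hp) (hg _ _ ((hL p).1 hp))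
    _ ≤ Real.sqrt (#{p ∈ L | p.1 < m} / n) := by
        rw [← mul_sum, mul_div_cancel_left₀ _ two_ne_zero]
        exact sum_sqrt_div_le_sqrt_card_div _ (fun p => blockSum_nonneg hf0 _ _ _) hmass n
    _ ≤ (5 / 2) * Real.sqrt (#{p ∈ L | p.1 < m} / n) := by
        linarith [Real.sqrt_nonneg (#{p ∈ L | p.1 < m} / n : ℝ)]

/-- **Proposition 3.1**: for `k = 2^m` a power of two, `n ≥ 1`, and `f` a
non-increasing probability density on `{1, …, k}`, the idealized tree-based estimate
`f*_n` (the function `g` equal to the average `f̄_{I_u} = f_{I_u}/|I_u|` of `f` on each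
leaf interval `I_u`, `u ∈ L*`) satisfies
`TV(f*_n, f) ≤ (5/2) √(|{u ∈ L* : |I_u| > 1}| / n)`. -/
theorem stmt5 (m n : ℕ) (hn : 1 ≤ n) (f : ℕ → ℝ)
    (hf0 : ∀ x, 0 ≤ f x)
    (hf1 : ∑ x ∈ Finset.Icc 1 (2 ^ m), f x = 1)
    (hmono : ∀ x, 1 ≤ x → x + 1 ≤ 2 ^ m → f (x + 1) ≤ f x)
    (g : ℕ → ℝ)
    (hg : ∀ j i, IsLeaf f n m j i → ∀ x ∈ nodeInterval m j i,
      g x = blockSum f m j i / (2 : ℝ) ^ (m - j))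
    (L : Finset (ℕ × ℕ))
    (hL : ∀ p : ℕ × ℕ, p ∈ L ↔ IsLeaf f n m p.1 p.2) :
    (∑ x ∈ Finset.Icc 1 (2 ^ m), |g x - f x|) / 2 ≤
      (5 / 2) * Real.sqrt (((L.filter fun p => p.1 < m).card : ℝ) / n) :=
  stmt5_general m n f hf0 hf1 hmono g hg L hL
end

section
/- Let f be a non-increasing nonnegative function on {1,…,k} and let I_u ⊆ {1,…,k} be an interval of even cardinality with left half I_v and right half I_w. Then Σ_{x∈I_u} |f̄_{I_u} − f(x)| ≤ 5 (f_{I_v} − f_{I_w}). -/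
open Finset

/-!
Let `c = f (a + m)` be the value at the midpoint, so `f ≥ c` on the left half and `f ≤ c` on the
right half. Then `∑ |c - f x| = f_{I_v} - f_{I_w}` exactly, and the mean `μ` satisfies
`2m |μ - c| = |f_{I_v} - m c + f_{I_w} - m c| ≤ f_{I_v} - f_{I_w}`. The triangle inequality through
`c` therefore bounds the mean absolute deviation by `2 (f_{I_v} - f_{I_w})`.
-/

section MeanDeviation

variable {ι : Type*}

theorem sum_abs_sub_le_card_mul_abs_sub_add (s : Finset ι) (g : ι → ℝ) (μ c : ℝ) :
    ∑ x ∈ s, |μ - g x| ≤ #s * |μ - c| + ∑ x ∈ s, |c - g x| :=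
  calc ∑ x ∈ s, |μ - g x| ≤ ∑ x ∈ s, (|μ - c| + |c - g x|) :=
        sum_le_sum fun x _ => abs_sub_le μ c (g x)
    _ = #s * |μ - c| + ∑ x ∈ s, |c - g x| := by rw [sum_add_distrib, sum_const, nsmul_eq_mul]

theorem sum_abs_sub_of_le {s : Finset ι} {g : ι → ℝ} {c : ℝ} (h : ∀ x ∈ s, c ≤ g x) :
    ∑ x ∈ s, |c - g x| = ∑ x ∈ s, g x - #s * c := by
  rw [sum_congr rfl fun x hx => abs_sub_comm c (g x) ▸ abs_of_nonneg (sub_nonneg.2 (h x hx)),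
    sum_sub_distrib, sum_const, nsmul_eq_mul]

theorem sum_abs_sub_of_ge {s : Finset ι} {g : ι → ℝ} {c : ℝ} (h : ∀ x ∈ s, g x ≤ c) :
    ∑ x ∈ s, |c - g x| = #s * c - ∑ x ∈ s, g x := by
  rw [sum_congr rfl fun x hx => abs_of_nonneg (sub_nonneg.2 (h x hx)),
    sum_sub_distrib, sum_const, nsmul_eq_mul]

theorem sum_abs_mean_sub_le_two_mul_sum_sub_sum [DecidableEq ι] {s t : Finset ι}
    (hst : Disjoint s t) {m : ℕ} (hm : 0 < m) (hs : #s = m) (ht : #t = m)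
    (g : ι → ℝ) (c : ℝ) (hsc : ∀ x ∈ s, c ≤ g x) (htc : ∀ x ∈ t, g x ≤ c) :
    ∑ x ∈ s ∪ t, |(∑ y ∈ s ∪ t, g y) / (2 * m) - g x| ≤
      2 * (∑ x ∈ s, g x - ∑ x ∈ t, g x) := by
  set μ := (∑ y ∈ s ∪ t, g y) / (2 * m)
  have hs_ge : m * c ≤ ∑ x ∈ s, g x := by
    simpa [hs] using card_nsmul_le_sum s g c hsc
  have ht_le : ∑ x ∈ t, g x ≤ m * c := by
    simpa [ht] using sum_le_card_nsmul t g c htc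
  have hμ : 2 * m * μ = ∑ x ∈ s, g x + ∑ x ∈ t, g x := by
    rw [mul_div_cancel₀ _ (by positivity), sum_union hst]
  have hmean : 2 * m * |μ - c| ≤ ∑ x ∈ s, g x - ∑ x ∈ t, g x := by
    rw [← abs_of_nonneg (by positivity : (0 : ℝ) ≤ 2 * m), ← abs_mul, mul_sub, hμ]
    exact abs_le.2 ⟨by linarith, by linarith⟩
  have hcard : (#(s ∪ t) : ℝ) = 2 * m := by
    rw [card_union_of_disjoint hst, hs, ht]; push_cast; ring
  calc ∑ x ∈ s ∪ t, |μ - g x|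
      ≤ #(s ∪ t) * |μ - c| + ∑ x ∈ s ∪ t, |c - g x| := sum_abs_sub_le_card_mul_abs_sub_add _ _ _ _
    _ = 2 * m * |μ - c| + (∑ x ∈ s, g x - ∑ x ∈ t, g x) := by
      rw [hcard, sum_union hst, sum_abs_sub_of_le hsc, sum_abs_sub_of_ge htc, hs, ht]; ring
    _ ≤ 2 * (∑ x ∈ s, g x - ∑ x ∈ t, g x) := by linarith

end MeanDeviation

theorem stmt7_general (k a m : ℕ) (ha : 1 ≤ a) (hm : 1 ≤ m) (hk : a + 2 * m ≤ k + 1)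
    (f : ℕ → ℝ)
    (hmono : ∀ x, 1 ≤ x → x + 1 ≤ k → f (x + 1) ≤ f x) :
    ∑ x ∈ Finset.Ico a (a + 2 * m),
        |(∑ y ∈ Finset.Ico a (a + 2 * m), f y) / (2 * (m : ℝ)) - f x| ≤
      5 * (∑ x ∈ Finset.Ico a (a + m), f x - ∑ x ∈ Finset.Ico (a + m) (a + 2 * m), f x) := by
  have hanti : AntitoneOn f (Set.Icc 1 k) :=
    antitoneOn_of_add_one_le Set.ordConnected_Icc fun x _ hx hx1 => hmono x hx.1 hx1.2
  have hmid : a + m ∈ Set.Icc 1 k := ⟨by omega, by omega⟩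
  have hbound := sum_abs_mean_sub_le_two_mul_sum_sub_sum
    (Ico_disjoint_Ico_consecutive a (a + m) (a + 2 * m)) hm
    ((Nat.card_Ico _ _).trans (by omega)) ((Nat.card_Ico _ _).trans (by omega))
    f (f (a + m))
    (fun x hx => by
      rw [mem_Ico] at hx
      exact hanti ⟨by omega, by omega⟩ hmid hx.2.le)
    (fun x hx => by
      rw [mem_Ico] at hx
      exact hanti hmid ⟨by omega, by omega⟩ hx.1)
  rw [Ico_union_Ico_eq_Ico (by omega) (by omega)] at hbound
  have hgap := (sum_nonneg fun x _ => abs_nonneg _).trans hbound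
  linarith

/-- Let `f` be a non-increasing nonnegative function on `{1, …, k}` and let
`I_u = {a, …, a + 2m - 1} ⊆ {1, …, k}` be an interval of even cardinality with left
half `I_v = {a, …, a + m - 1}` and right half `I_w = {a + m, …, a + 2m - 1}`. Then
`∑_{x ∈ I_u} |f̄_{I_u} - f x| ≤ 5 (f_{I_v} - f_{I_w})`, where `f_I = ∑_{x ∈ I} f x`
and `f̄_I = f_I / |I|`. -/
theorem stmt7 (k a m : ℕ) (ha : 1 ≤ a) (hm : 1 ≤ m) (hk : a + 2 * m ≤ k + 1)
    (f : ℕ → ℝ) (hf0 : ∀ x, 0 ≤ f x)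
    (hmono : ∀ x, 1 ≤ x → x + 1 ≤ k → f (x + 1) ≤ f x) :
    ∑ x ∈ Finset.Ico a (a + 2 * m),
        |(∑ y ∈ Finset.Ico a (a + 2 * m), f y) / (2 * (m : ℝ)) - f x| ≤
      5 * (∑ x ∈ Finset.Ico a (a + m), f x - ∑ x ∈ Finset.Ico (a + m) (a + 2 * m), f x) :=
  stmt7_general k a m ha hm hk f hmono
end

section
/- Let f be a non-increasing nonnegative function on {1,…,k}, and let I_v and I_w be adjacent intervals of equal cardinality with I_w immediately to the right of I_v. Then Σ_{x∈I_v} |f̄_{I_v} − f(x)| ≤ 2 (f_{I_v} − f_{I_w}). -/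
open Finset

/-!
Write `μ` for the mean of `f` over `I_v`. Shifting by `m` maps `I_v` onto `I_w`, and
monotonicity puts each `f (x + m)` below every value of `f` on `I_v`, hence below `μ`.
So `|μ - f x| ≤ (μ - f x) + 2 (f x - f (x + m))` termwise, and the first summands add up
to zero.
-/

theorem Finset.sum_abs_mean_sub_le {ι : Type*} (s : Finset ι) (f g : ι → ℝ)
    (hgf : ∀ x ∈ s, ∀ y ∈ s, g x ≤ f y) :
    ∑ x ∈ s, |(∑ y ∈ s, f y) / #s - f x| ≤ 2 * ∑ x ∈ s, (f x - g x) := by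
  rcases s.eq_empty_or_nonempty with rfl | hs
  · simp
  set μ := (∑ y ∈ s, f y) / #s
  have hcard : (0 : ℝ) < #s := by exact_mod_cast hs.card_pos
  have hg_le_mean : ∀ x ∈ s, g x ≤ μ := fun x hx => by
    rw [le_div_iff₀ hcard, mul_comm, ← nsmul_eq_mul]
    exact card_nsmul_le_sum s f (g x) (hgf x hx)
  have hdev_sum : ∑ x ∈ s, (μ - f x) = 0 := by
    rw [sum_sub_distrib, sum_const, nsmul_eq_mul, mul_div_cancel₀ _ hcard.ne', sub_self]
  calc ∑ x ∈ s, |μ - f x|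
      ≤ ∑ x ∈ s, ((μ - f x) + 2 * (f x - g x)) := sum_le_sum fun x hx => by
        have := hg_le_mean x hx
        have := hgf x hx x hx
        rw [abs_le]
        constructor <;> linarith
    _ = 2 * ∑ x ∈ s, (f x - g x) := by rw [sum_add_distrib, hdev_sum, zero_add, mul_sum]

theorem AntitoneOn.sum_abs_mean_sub_le_two_mul_sub {f : ℕ → ℝ} {a m : ℕ}
    (hf : AntitoneOn f (Set.Ico a (a + 2 * m))) :
    ∑ x ∈ Ico a (a + m), |(∑ y ∈ Ico a (a + m), f y) / (m : ℝ) - f x| ≤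
      2 * (∑ x ∈ Ico a (a + m), f x - ∑ x ∈ Ico (a + m) (a + 2 * m), f x) := by
  have hshift : ∑ x ∈ Ico (a + m) (a + 2 * m), f x = ∑ x ∈ Ico a (a + m), f (x + m) := by
    rw [sum_Ico_add', two_mul, add_assoc]
  have h := sum_abs_mean_sub_le (Ico a (a + m)) f (fun x => f (x + m)) fun x hx y hy => by
    simp only [mem_Ico] at hx hy
    exact hf (by simp only [Set.mem_Ico]; omega) (by simp only [Set.mem_Ico]; omega) (by omega)
  rwa [Nat.card_Ico, Nat.add_sub_cancel_left, sum_sub_distrib, ← hshift] at h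

theorem stmt8_general (k a m : ℕ) (ha : 1 ≤ a) (hk : a + 2 * m ≤ k + 1)
    (f : ℕ → ℝ)
    (hmono : ∀ x, 1 ≤ x → x + 1 ≤ k → f (x + 1) ≤ f x) :
    ∑ x ∈ Finset.Ico a (a + m),
        |(∑ y ∈ Finset.Ico a (a + m), f y) / (m : ℝ) - f x| ≤
      2 * (∑ x ∈ Finset.Ico a (a + m), f x - ∑ x ∈ Finset.Ico (a + m) (a + 2 * m), f x) := by
  have hanti : AntitoneOn f (Set.Icc 1 k) :=
    antitoneOn_of_add_one_le Set.ordConnected_Icc fun x _ hx hx1 => hmono x hx.1 hx1.2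
  refine (hanti.mono fun x hx => ?_).sum_abs_mean_sub_le_two_mul_sub
  simp only [Set.mem_Ico, Set.mem_Icc] at hx ⊢
  omega

/-- Let `f` be a non-increasing nonnegative function on `{1, …, k}` and let
`I_v = {a, …, a + m - 1}` and `I_w = {a + m, …, a + 2m - 1}` be adjacent intervals of
equal cardinality in `{1, …, k}`, with `I_w` immediately to the right of `I_v`. Then
`∑_{x ∈ I_v} |f̄_{I_v} - f x| ≤ 2 (f_{I_v} - f_{I_w})`, where `f_I = ∑_{x ∈ I} f x`
and `f̄_I = f_I / |I|`. -/
theorem stmt8 (k a m : ℕ) (ha : 1 ≤ a) (hm : 1 ≤ m) (hk : a + 2 * m ≤ k + 1)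
    (f : ℕ → ℝ) (hf0 : ∀ x, 0 ≤ f x)
    (hmono : ∀ x, 1 ≤ x → x + 1 ≤ k → f (x + 1) ≤ f x) :
    ∑ x ∈ Finset.Ico a (a + m),
        |(∑ y ∈ Finset.Ico a (a + m), f y) / (m : ℝ) - f x| ≤
      2 * (∑ x ∈ Finset.Ico a (a + m), f x - ∑ x ∈ Finset.Ico (a + m) (a + 2 * m), f x) :=
  stmt8_general k a m ha hk f hmono
end

section
/- Let n ≥ 1 be a real number and let (b_i)_{i≥1} be a sequence of nonnegative reals satisfying b_1 > 1/n and b_i > b_{i−1} + sqrt( 3 (Σ_{j=1}^{i−1} b_j) / n ) for all i ≥ 2. Then b_i > i³/(27n) for all i ≥ 1, and Σ_{j=1}^{i} b_j ≥ i⁴/(108n) for all i ≥ 1. -/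
open Finset

/-- Let `n ≥ 1` be a real number and let `(b_i)_{i ≥ 1}` be a sequence of nonnegative
reals satisfying `b_1 > 1/n` and `b_i > b_{i-1} + √(3 (∑_{j=1}^{i-1} b_j) / n)` for all
`i ≥ 2`. Then `b_i > i³/(27n)` for all `i ≥ 1`, and `∑_{j=1}^{i} b_j ≥ i⁴/(108n)` for
all `i ≥ 1`. -/
theorem stmt16 (n : ℝ) (hn : 1 ≤ n) (b : ℕ → ℝ)
    (h0 : ∀ i : ℕ, 1 ≤ i → 0 ≤ b i)
    (h1 : 1 / n < b 1)
    (hrec : ∀ i : ℕ, 2 ≤ i →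
      b (i - 1) + Real.sqrt (3 * (∑ j ∈ Finset.Icc 1 (i - 1), b j) / n) < b i) :
    (∀ i : ℕ, 1 ≤ i → (i : ℝ) ^ 3 / (27 * n) < b i) ∧
    (∀ i : ℕ, 1 ≤ i → (i : ℝ) ^ 4 / (108 * n) ≤ ∑ j ∈ Finset.Icc 1 i, b j) := by
  have hn0 : (0:ℝ) < n := lt_of_lt_of_le one_pos hn
  have h1' : 1 < b 1 * n := by
    have h1c := h1
    rwa [div_lt_iff₀ hn0] at h1c
  -- sum of cubes lower bound
  have cube_sum : ∀ m : ℕ, (m:ℝ)^4/4 ≤ ∑ j ∈ Finset.Icc 1 m, (j:ℝ)^3 := by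
    intro m
    induction m with
    | zero => simp
    | succ m ih =>
      rw [Finset.sum_Icc_succ_top (by omega : 1 ≤ m + 1)]
      have hm : (0:ℝ) ≤ (m:ℝ) := Nat.cast_nonneg m
      push_cast
      push_cast at ih
      nlinarith [sq_nonneg ((m:ℝ))]
  -- lower bound on partial sums given pointwise bounds
  have sum_lb : ∀ m : ℕ, (∀ j : ℕ, 1 ≤ j → j ≤ m → (j:ℝ)^3/(27*n) < b j) →
      (m:ℝ)^4/(108*n) ≤ ∑ j ∈ Finset.Icc 1 m, b j := by
    intro m hm
    have step : ∑ j ∈ Finset.Icc 1 m, (j:ℝ)^3/(27*n) ≤ ∑ j ∈ Finset.Icc 1 m, b j := by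
      apply Finset.sum_le_sum
      intro j hj
      rw [Finset.mem_Icc] at hj
      exact (hm j hj.1 hj.2).le
    have e : ∑ j ∈ Finset.Icc 1 m, (j:ℝ)^3/(27*n) = (∑ j ∈ Finset.Icc 1 m, (j:ℝ)^3)/(27*n) := by
      rw [Finset.sum_div]
    refine le_trans ?_ step
    rw [e, div_le_div_iff₀ (by positivity) (by positivity)]
    have := cube_sum m
    nlinarith [cube_sum m]
  -- key pointwise bound
  have key : ∀ i : ℕ, 1 ≤ i → (i:ℝ)^3/(27*n) < b i := by
    intro i
    induction i using Nat.strong_induction_on with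
    | _ i ih =>
      intro hi
      match i, hi with
      | 1, _ =>
        rw [div_lt_iff₀ (by positivity)]
        push_cast
        nlinarith [h0 1 le_rfl]
      | 2, _ =>
        have h2 := hrec 2 le_rfl
        norm_num at h2
        have hs := Real.sqrt_nonneg (3 * b 1 / n)
        rw [div_lt_iff₀ (by positivity)]
        push_cast
        nlinarith
      | 3, _ =>
        have h2 := hrec 2 (by norm_num)
        norm_num at h2
        have h3 := hrec 3 (by norm_num)
        have e3 : (3:ℕ) - 1 = 2 := by norm_num
        rw [e3] at h3
        have hs2 := Real.sqrt_nonneg (3 * b 1 / n)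
        have hs3 := Real.sqrt_nonneg (3 * (∑ j ∈ Finset.Icc 1 2, b j) / n)
        rw [div_lt_iff₀ (by positivity)]
        push_cast
        nlinarith
      | (m+4), _ =>
        have hb3 : ((m+3:ℕ):ℝ)^3/(27*n) < b (m+3) := ih (m+3) (by omega) (by omega)
        have hS : ((m+3:ℕ):ℝ)^4/(108*n) ≤ ∑ j ∈ Finset.Icc 1 (m+3), b j :=
          sum_lb (m+3) (fun j hj1 hj2 => ih j (by omega) hj1)
        have hr := hrec (m+4) (by omega)
        have e : m + 4 - 1 = m + 3 := by omega
        rw [e] at hr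
        set S := ∑ j ∈ Finset.Icc 1 (m+3), b j with hSdef
        have hsq : ((m+3:ℕ):ℝ)^2/(6*n) ≤ Real.sqrt (3 * S / n) := by
          apply Real.le_sqrt_of_sq_le
          rw [div_pow, div_le_div_iff₀ (by positivity) (by positivity)]
          have hS' : ((m+3:ℕ):ℝ)^4 ≤ S * (108*n) := by
            rwa [div_le_iff₀ (by positivity)] at hS
          push_cast
          push_cast at hS'
          nlinarith [Nat.cast_nonneg (α := ℝ) m, sq_nonneg ((m:ℝ)+3), hn0]
        rw [div_lt_iff₀ (by positivity)] at hb3 ⊢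
        rw [div_le_iff₀ (by positivity)] at hsq
        have hm : (0:ℝ) ≤ (m:ℝ) := Nat.cast_nonneg m
        push_cast at hb3 hsq ⊢
        nlinarith [hr, hb3, hsq, hm, sq_nonneg ((m:ℝ)+3)]
  refine ⟨key, fun i hi => sum_lb i (fun j hj1 hj2 => key j hj1)⟩
end
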